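/- arXiv:1202.5958 — 2 statements merged into one kernel-verified Lean document; each statement's English description precedes it below -/
import Mathlib

section
/- Let k be a field of characteristic 0, A an associative k-algebra (not necessarily unital), and let TA = ⊕_{m≥1} A^{⊗m} be the non-unital tensor algebra of A with concatenation product. For x, y ∈ A set ω(x,y) = x ⊗ y − xy ∈ A^{⊗2} ⊕ A ⊆ TA. Define a k-linear map α from Ω^{ev}A = ⊕_{n≥0} Ω^{2n}A to TA by: α(a) = a for a ∈ Ω⁰A = A, and for n ≥ 1, α((a,λ) ⊗ a₁ ⊗ … ⊗ a₂ₙ) = a · π + λ π where π = ω(a₁,a₂) · ω(a₃,a₄) ⋯ ω(a₂ₙ₋₁,a₂ₙ) (products taken in TA). Then α is a k-linear bijection from Ω^{ev}A onto TA. -/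
/-!
STATEMENT 3: Let `k` be a field of characteristic 0 and `A` an associative
`k`-algebra (not necessarily unital).  Let `TA = ⊕_{m≥1} A^{⊗m}` be the
non-unital tensor algebra of `A` with the concatenation product.  For
`x, y ∈ A` set `ω(x,y) = x ⊗ y − x*y`.  The map
`α : Ω^{ev}A → TA` given by `α(a) = a` on `Ω⁰A = A` and
`α((a,λ) ⊗ a₁ ⊗ … ⊗ a₂ₙ) = a·π + λ·π`, with
`π = ω(a₁,a₂) ⋯ ω(a₂ₙ₋₁,a₂ₙ)`, is a `k`-linear bijection.

The non-unital tensor algebra is formalized as any non-unital `k`-algebra `T`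
with a `k`-linear identification `T ≃ ⊕_{m≥0} A^{⊗(m+1)}` under which the
product is concatenation of elementary tensors; the even forms are
`Ω^{ev}A = A × ⊕_{n≥0} (Ã ⊗ A^{⊗(2n+2)})` (`Ã = Unitization k A`), and `α` is
any `k`-linear map satisfying the defining formula on elementary tensors.
-/

open scoped TensorProduct DirectSum
open TensorProduct PiTensorProduct

variable {T : Type}

/-- The ordered product `f 0 * f 1 * ⋯ * f n` in a non-unital ring. -/
def chainProd [NonUnitalRing T] (f : ℕ → T) : ℕ → T
  | 0 => f 0
  | (n + 1) => chainProd f n * f (n + 1)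

/-!
Filter `TA` by tensor length. Since `ω(x,y) ≡ x ⊗ y` modulo length one, the product
`π = ω(a₁,a₂) ⋯ ω(a₂ₙ₋₁,a₂ₙ)` is `a₁ ⊗ ⋯ ⊗ a₂ₙ` modulo shorter tensors. Hence `α` sends
`a ⊗ a₁ ⊗ ⋯ ⊗ a₂ₙ` (for `a ∈ A`) to `a ⊗ a₁ ⊗ ⋯ ⊗ a₂ₙ` modulo length `≤ 2n`, and
`1 ⊗ a₁ ⊗ ⋯ ⊗ a₂ₙ` to `a₁ ⊗ ⋯ ⊗ a₂ₙ` modulo length `≤ 2n - 1`: `α` is unitriangular for the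
length filtrations. Surjectivity follows by induction on the length, and injectivity by reading
off the two longest components of `α` on the top summand of a form.
-/

namespace DirectSum

variable (R : Type*) [Semiring R] (β : ℕ → Type*) [∀ i, AddCommMonoid (β i)]
  [∀ i, Module R (β i)]

def degLT (N : ℕ) : Submodule R (⨁ i, β i) where
  carrier := {x | ∀ j, N ≤ j → x j = 0}
  add_mem' hx hy j hj := by rw [add_apply, hx j hj, hy j hj, add_zero]
  zero_mem' _ _ := rfl
  smul_mem' c x hx j hj := by rw [DFinsupp.smul_apply, hx j hj, smul_zero]

variable {R β}

theorem degLT_mono : Monotone (degLT R β) := fun _ _ h _ hx j hj => hx j (h.trans hj)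

theorem exists_mem_degLT (x : ⨁ i, β i) : ∃ N, x ∈ degLT R β N := by
  classical
  refine ⟨x.support.sup id + 1, fun j hj => ?_⟩
  by_contra h
  have := Finset.le_sup (f := id) (DFinsupp.mem_support_iff.2 h)
  simp only [id] at this
  omega

theorem lof_mem_degLT {j N : ℕ} (h : j < N) (b : β j) : lof R ℕ β j b ∈ degLT R β N :=
  fun i hi => by rw [lof_eq_of]; exact of_eq_of_ne _ _ _ (by omega)

theorem lof_mem_degLT_iff {N : ℕ} {b : β N} : lof R ℕ β N b ∈ degLT R β N ↔ b = 0 := by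
  refine ⟨fun h => ?_, fun h => by rw [h, map_zero]; exact zero_mem _⟩
  simpa [lof_eq_of] using h N le_rfl

theorem degLT_eq_iSup (N : ℕ) : degLT R β N = ⨆ j < N, LinearMap.range (lof R ℕ β j) := by
  classical
  refine le_antisymm (fun x hx => ?_) (iSup₂_le fun j hj => ?_)
  · rw [← sum_support_of x]
    refine Submodule.sum_mem _ fun j hj => ?_
    have hjN : j < N := by
      by_contra h
      exact DFinsupp.mem_support_iff.1 hj (hx j (not_lt.1 h))
    exact Submodule.mem_iSup_of_mem j (Submodule.mem_iSup_of_mem hjN ⟨x j, lof_eq_of ..⟩)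
  · rintro _ ⟨b, rfl⟩
    exact lof_mem_degLT hj b

theorem sub_lof_mem_degLT {β : ℕ → Type*} [∀ i, AddCommGroup (β i)] [∀ i, Module R (β i)]
    {N : ℕ} {x : ⨁ i, β i} (hx : x ∈ degLT R β (N + 1)) :
    x - lof R ℕ β N (x N) ∈ degLT R β N := by
  intro j hj
  rcases hj.eq_or_lt with rfl | hj
  · simp [lof_eq_of]
  · rw [sub_apply, hx j hj, lof_eq_of, of_eq_of_ne _ _ _ hj.ne', sub_zero]

theorem degLT_zero : degLT R β 0 = ⊥ :=
  eq_bot_iff.2 fun _ hx => (Submodule.mem_bot R).2 (DFinsupp.ext fun j => hx j (Nat.zero_le j))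

end DirectSum

namespace PiTensorProduct

variable {R M : Type*} [CommSemiring R] [AddCommMonoid M] [Module R M]

theorem span_range_tprod_comp_val (n : ℕ) :
    Submodule.span R (Set.range fun a : ℕ → M => ⨂ₜ[R] i : Fin n, a i) = ⊤ := by
  refine eq_top_iff.2 ((span_tprod_eq_top (R := R) (s := fun _ : Fin n => M)).symm.le.trans
    (Submodule.span_mono ?_))
  rintro _ ⟨f, rfl⟩
  exact ⟨Function.extend Fin.val f 0, congrArg _ (funext fun i =>
    Fin.val_injective.extend_apply f 0 i)⟩

theorem map_mem_of_tprod {N : Type*} [AddCommMonoid N] [Module R N] {n : ℕ}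
    (f : (⨂[R] (_ : Fin n), M) →ₗ[R] N) {S : Submodule R N}
    (h : ∀ a : ℕ → M, f (⨂ₜ[R] i, a i) ∈ S) (t : ⨂[R] (_ : Fin n), M) : f t ∈ S := by
  have : ⊤ ≤ S.comap f := (span_range_tprod_comp_val n).symm.le.trans
    (Submodule.span_le.2 (Set.range_subset_iff.2 h))
  exact this trivial

def consEquiv (r : ℕ) : M ⊗[R] (⨂[R] (_ : Fin r), M) ≃ₗ[R] ⨂[R] (_ : Fin (r + 1)), M :=
  (TensorProduct.congr (subsingletonEquiv (0 : Fin 1)).symm (LinearEquiv.refl R _)).trans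
    ((tmulEquiv R M).trans
      (reindex R (fun _ => M) (finSumFinEquiv.trans (finCongr (add_comm 1 r)))))

theorem consEquiv_tmul_tprod {r : ℕ} (b : M) (f : Fin r → M) :
    consEquiv r (b ⊗ₜ[R] tprod R f) = tprod R (Fin.cons b f) := by
  simp only [consEquiv, LinearEquiv.trans_apply, congr_tmul, subsingletonEquiv_symm_apply',
    LinearEquiv.refl_apply, tmulEquiv_apply, reindex_tprod]
  congr 1
  ext i
  refine Fin.cases ?_ (fun j => ?_) i
  · have : (finSumFinEquiv.trans (finCongr (add_comm 1 r))).symm 0 = Sum.inl 0 := by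
      rw [Equiv.symm_apply_eq]; rfl
    rw [this]; rfl
  · have : (finSumFinEquiv.trans (finCongr (add_comm 1 r))).symm j.succ = Sum.inr j := by
      rw [Equiv.symm_apply_eq]; ext; simp
    rw [this]; rfl

end PiTensorProduct

theorem Unitization.exists_eq_one_tmul_add_map_inrHom {R A W : Type*} [CommSemiring R]
    [AddCommMonoid A] [Module R A] [AddCommMonoid W] [Module R W]
    (z : Unitization R A ⊗[R] W) :
    ∃ (u : W) (v : A ⊗[R] W), z = 1 ⊗ₜ u + TensorProduct.map (inrHom R R A) LinearMap.id v := by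
  induction z using TensorProduct.induction_on with
  | zero => exact ⟨0, 0, by simp⟩
  | tmul x w =>
    refine ⟨x.fst • w, x.snd ⊗ₜ w, ?_⟩
    rw [TensorProduct.map_tmul, LinearMap.id_apply, tmul_smul, smul_tmul', ← add_tmul]
    congr 1
    ext <;> simp
  | add z z' hz hz' =>
    obtain ⟨u, v, rfl⟩ := hz
    obtain ⟨u', v', rfl⟩ := hz'
    exact ⟨u + u', v + v', by rw [tmul_add, map_add]; abel⟩

namespace TensorModel

open DirectSum

variable {k A : Type*} [CommRing k] [NonUnitalRing A] [Module k A]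
  [NonUnitalRing T] [Module k T] (eT : T ≃ₗ[k] ⨁ m : ℕ, ⨂[k] (_ : Fin (m + 1)), A)

/-- Since the `m`-th summand is `A^{⊗(m+1)}`, this is the span of the tensors of length `≤ N`. -/
def filtLT (N : ℕ) : Submodule k T :=
  (degLT k (fun m => ⨂[k] (_ : Fin (m + 1)), A) N).comap eT.toLinearMap

def incl (m : ℕ) : (⨂[k] (_ : Fin (m + 1)), A) →ₗ[k] T :=
  eT.symm.toLinearMap ∘ₗ lof k ℕ (fun m => ⨂[k] (_ : Fin (m + 1)), A) m

def pureTensor (m : ℕ) (a : ℕ → A) : T := incl eT m (⨂ₜ[k] i : Fin (m + 1), a i)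

variable (k A) in
def evenIncl (n : ℕ) : Unitization k A ⊗[k] (⨂[k] (_ : Fin (2 * n + 2)), A) →ₗ[k]
    A × ⨁ n : ℕ, Unitization k A ⊗[k] (⨂[k] (_ : Fin (2 * n + 2)), A) :=
  LinearMap.inr k A _ ∘ₗ lof k ℕ (fun n => Unitization k A ⊗[k] (⨂[k] (_ : Fin (2 * n + 2)), A)) n

/-- The product `π = ω(a₀,a₁) ⋯ ω(a₂ₙ,a₂ₙ₊₁)`. -/
def omegaProd (ι : A → T) (a : ℕ → A) : ℕ → T :=
  chainProd (fun j => ι (a (2 * j)) * ι (a (2 * j + 1)) - ι (a (2 * j) * a (2 * j + 1)))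

variable {eT}

theorem filtLT_mono {M N : ℕ} (h : M ≤ N) : filtLT eT M ≤ filtLT eT N :=
  Submodule.comap_mono (degLT_mono h)

theorem exists_mem_filtLT (t : T) : ∃ N, t ∈ filtLT eT N := exists_mem_degLT (R := k) (eT t)

theorem incl_mem_filtLT {m N : ℕ} (h : m < N) (t : ⨂[k] (_ : Fin (m + 1)), A) :
    incl eT m t ∈ filtLT eT N := by
  simpa [filtLT, incl] using lof_mem_degLT (R := k) (β := fun m => ⨂[k] (_ : Fin (m + 1)), A) h t

theorem incl_mem_filtLT_iff {m : ℕ} {t : ⨂[k] (_ : Fin (m + 1)), A} :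
    incl eT m t ∈ filtLT eT m ↔ t = 0 := by
  simp [filtLT, incl, lof_mem_degLT_iff]

theorem filtLT_le_of_incl_mem {N : ℕ} {S : Submodule k T}
    (h : ∀ j < N, ∀ t, incl eT j t ∈ S) : filtLT eT N ≤ S := by
  have : degLT k _ N ≤ S.comap eT.symm.toLinearMap := by
    rw [degLT_eq_iSup]
    exact iSup₂_le fun j hj => by rintro _ ⟨t, rfl⟩; exact h j hj t
  intro t ht
  simpa using this ht

theorem pureTensor_mem_filtLT {m N : ℕ} (h : m < N) (a : ℕ → A) : pureTensor eT m a ∈ filtLT eT N :=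
  incl_mem_filtLT h _

theorem pureTensor_congr {m : ℕ} {a b : ℕ → A} (h : ∀ i ≤ m, a i = b i) :
    pureTensor eT m a = pureTensor eT m b := by
  unfold pureTensor
  congr 2
  ext i
  exact h i (Nat.lt_succ_iff.1 i.2)


theorem incl_injective (m : ℕ) : Function.Injective (incl eT m) :=
  eT.symm.injective.comp (DirectSum.of_injective (β := fun m => ⨂[k] (_ : Fin (m + 1)), A) m)

variable (k A) in
theorem degLT_le_span_tprod (N : ℕ) :
    degLT k (fun m => ⨂[k] (_ : Fin (m + 1)), A) N ≤ Submodule.span k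
      {x | ∃ j < N, ∃ a : ℕ → A, x = lof k ℕ (fun m => ⨂[k] (_ : Fin (m + 1)), A) j
        (⨂ₜ[k] i, a i)} := by
  rw [degLT_eq_iSup]
  refine iSup₂_le fun j hj => ?_
  rw [LinearMap.range_eq_map, ← span_range_tprod_comp_val, Submodule.map_span]
  refine Submodule.span_mono ?_
  rintro _ ⟨_, ⟨a, rfl⟩, rfl⟩
  exact ⟨j, hj, a, rfl⟩

section Inclusion

variable {ι : A → T} (hι : ∀ b, ι b = pureTensor eT 0 (fun _ => b))
include hι

theorem ι_eq_incl (b : A) : ι b = incl eT 0 ((subsingletonEquiv (0 : Fin 1)).symm b) := by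
  rw [hι, subsingletonEquiv_symm_apply']
  rfl

theorem ι_injective : Function.Injective ι := fun b c h => by
  rw [ι_eq_incl hι, ι_eq_incl hι] at h
  exact (subsingletonEquiv (0 : Fin 1)).symm.injective (incl_injective 0 h)

theorem ι_zero : ι 0 = 0 := by rw [ι_eq_incl hι, map_zero, map_zero]

theorem ι_mem_filtLT (b : A) : ι b ∈ filtLT eT 1 := (hι b) ▸ pureTensor_mem_filtLT zero_lt_one _

end Inclusion

section Concatenation

variable (hmul : ∀ (p q : ℕ) (a c : ℕ → A), pureTensor eT p a * pureTensor eT q c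
    = pureTensor eT (p + q + 1) (fun i => if i ≤ p then a i else c (i - (p + 1))))
include hmul

theorem pureTensor_mul_pureTensor_shift (p q : ℕ) (a : ℕ → A) :
    pureTensor eT p a * pureTensor eT q (fun i => a (p + 1 + i)) = pureTensor eT (p + q + 1) a := by
  rw [hmul]
  refine pureTensor_congr fun i _ => ?_
  split_ifs
  · rfl
  · congr 1; omega

theorem mul_mem_filtLT [SMulCommClass k T T] [IsScalarTower k T T] {p q N : ℕ} {u v : T}
    (hu : u ∈ filtLT eT p) (hv : v ∈ filtLT eT q) (h : p + q ≤ N) : u * v ∈ filtLT eT N := by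
  let B := (LinearMap.mul k T).compl₁₂ eT.symm.toLinearMap eT.symm.toLinearMap
  have hB : Submodule.map₂ B (degLT k _ p) (degLT k _ q) ≤ filtLT eT N := by
    refine (Submodule.map₂_le_map₂ (degLT_le_span_tprod k A p)
      (degLT_le_span_tprod k A q)).trans ?_
    rw [Submodule.map₂_span_span, Submodule.span_le]
    rintro _ ⟨_, ⟨i, hi, a, rfl⟩, _, ⟨j, hj, c, rfl⟩, rfl⟩
    change pureTensor eT i a * pureTensor eT j c ∈ filtLT eT N
    rw [hmul]
    exact pureTensor_mem_filtLT (by omega) _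
  simpa [B] using hB (Submodule.apply_mem_map₂ B hu hv)

variable {ι : A → T} (hι : ∀ b, ι b = pureTensor eT 0 (fun _ => b))
include hι

theorem ι_mul_incl [SMulCommClass k T T] (b : A) {m : ℕ} (t : ⨂[k] (_ : Fin (m + 1)), A) :
    ι b * incl eT m t = incl eT (m + 1) (consEquiv (m + 1) (b ⊗ₜ t)) := by
  refine LinearMap.congr_fun (f := LinearMap.mulLeft k (ι b) ∘ₗ incl eT m)
    (g := incl eT (m + 1) ∘ₗ (consEquiv (m + 1)).toLinearMap ∘ₗ TensorProduct.mk k A _ b)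
    (LinearMap.ext_on_range (span_range_tprod_comp_val _) fun a => ?_) t
  change ι b * pureTensor eT m a = incl eT (m + 1) (consEquiv (m + 1) (b ⊗ₜ (⨂ₜ[k] i, a i)))
  rw [hι, hmul, consEquiv_tmul_tprod, zero_add]
  unfold pureTensor
  congr 2
  ext i
  refine Fin.cases ?_ (fun j => ?_) i <;> simp

theorem ι_mul_ι (a : ℕ → A) (j : ℕ) :
    ι (a j) * ι (a (j + 1)) = pureTensor eT 1 (fun i => a (j + i)) := by
  rw [hι, hι, hmul]
  refine pureTensor_congr fun i hi => ?_
  interval_cases i <;> simp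

theorem omegaProd_sub_pureTensor_mem [SMulCommClass k T T] [IsScalarTower k T T] (a : ℕ → A)
    (n : ℕ) : omegaProd ι a n - pureTensor eT (2 * n + 1) a ∈ filtLT eT (2 * n + 1) := by
  induction n with
  | zero =>
    have h0 : omegaProd ι a 0 = ι (a 0) * ι (a (0 + 1)) - ι (a 0 * a 1) := rfl
    rw [h0, ι_mul_ι hmul hι, pureTensor_congr (b := a) (by intro i _; rw [zero_add])]
    change pureTensor eT 1 a - _ - pureTensor eT 1 a ∈ filtLT eT 1
    rw [sub_sub_cancel_left]
    exact neg_mem (ι_mem_filtLT hι _)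
  | succ n ih =>
    set π := omegaProd ι a n
    set P := pureTensor eT (2 * n + 1) a
    set Q := pureTensor eT 1 (fun i => a (2 * n + 1 + 1 + i))
    set s := ι (a (2 * (n + 1)) * a (2 * (n + 1) + 1))
    have hstep : omegaProd ι a (n + 1) = π * (Q - s) := by
      change π * (ι (a (2 * (n + 1))) * ι (a (2 * (n + 1) + 1)) - s) = _
      rw [ι_mul_ι hmul hι]
      rfl
    have hQ : Q - s ∈ filtLT eT 2 :=
      sub_mem (pureTensor_mem_filtLT one_lt_two _) (filtLT_mono one_le_two (ι_mem_filtLT hι _))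
    rw [hstep, show 2 * (n + 1) + 1 = 2 * n + 1 + 1 + 1 by ring,
      ← pureTensor_mul_pureTensor_shift hmul (2 * n + 1) 1 a]
    have key : π * (Q - s) - P * Q = (π - P) * (Q - s) - P * s := by noncomm_ring
    rw [key]
    exact sub_mem (mul_mem_filtLT hmul ih hQ (by omega))
      (mul_mem_filtLT hmul (pureTensor_mem_filtLT (lt_add_one _) _) (ι_mem_filtLT hι _) (by omega))

variable (α : (A × ⨁ n : ℕ, Unitization k A ⊗[k] (⨂[k] (_ : Fin (2 * n + 2)), A)) →ₗ[k] T)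
  (hα : ∀ (n : ℕ) (x : Unitization k A) (a : ℕ → A),
    α (evenIncl k A n (x ⊗ₜ (⨂ₜ[k] i, a i))) = ι x.snd * omegaProd ι a n + x.fst • omegaProd ι a n)
include hα

omit hmul in
theorem alpha_one_tmul_tprod (n : ℕ) (a : ℕ → A) :
    α (evenIncl k A n (1 ⊗ₜ (⨂ₜ[k] i, a i))) = omegaProd ι a n := by
  rw [hα, Unitization.snd_one, Unitization.fst_one, ι_zero hι, zero_mul, zero_add, one_smul]

omit hmul in
theorem alpha_tmul [SMulCommClass k T T] {n : ℕ} (x : Unitization k A)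
    (t : ⨂[k] (_ : Fin (2 * n + 2)), A) :
    α (evenIncl k A n (x ⊗ₜ t))
      = ι x.snd * α (evenIncl k A n (1 ⊗ₜ t)) + x.fst • α (evenIncl k A n (1 ⊗ₜ t)) := by
  refine LinearMap.congr_fun (f := α ∘ₗ evenIncl k A n ∘ₗ TensorProduct.mk k _ _ x)
    (g := (LinearMap.mulLeft k (ι x.snd) + x.fst • LinearMap.id) ∘ₗ α ∘ₗ evenIncl k A n ∘ₗ
      TensorProduct.mk k _ _ 1)
    (LinearMap.ext_on_range (span_range_tprod_comp_val _) fun a => ?_) t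
  simp only [LinearMap.comp_apply, mk_apply, LinearMap.add_apply, LinearMap.mulLeft_apply,
    LinearMap.smul_apply, LinearMap.id_apply]
  rw [hα, alpha_one_tmul_tprod hι α hα]

variable [SMulCommClass k T T] [IsScalarTower k T T]

theorem alpha_one_tmul_sub_incl_mem {n : ℕ} (t : ⨂[k] (_ : Fin (2 * n + 2)), A) :
    α (evenIncl k A n (1 ⊗ₜ t)) - incl eT (2 * n + 1) t ∈ filtLT eT (2 * n + 1) := by
  refine map_mem_of_tprod (α ∘ₗ evenIncl k A n ∘ₗ TensorProduct.mk k _ _ 1 - incl eT (2 * n + 1))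
    (fun a => ?_) t
  simpa [alpha_one_tmul_tprod hι α hα, pureTensor] using omegaProd_sub_pureTensor_mem hmul hι a n

theorem alpha_inr_sub_incl_mem {n : ℕ} (v : A ⊗[k] (⨂[k] (_ : Fin (2 * n + 2)), A)) :
    α (evenIncl k A n (TensorProduct.map (Unitization.inrHom k k A) LinearMap.id v))
      - incl eT (2 * n + 2) (consEquiv (2 * n + 2) v) ∈ filtLT eT (2 * n + 2) := by
  induction v using TensorProduct.induction_on with
  | zero => simp
  | tmul b t =>
    rw [map_tmul, LinearMap.id_apply, Unitization.inrHom_apply, alpha_tmul hι α hα,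
      Unitization.snd_inr, Unitization.fst_inr, zero_smul, add_zero, ← ι_mul_incl hmul hι,
      ← mul_sub]
    exact mul_mem_filtLT hmul (ι_mem_filtLT hι b) (alpha_one_tmul_sub_incl_mem hmul hι α hα t)
      (by omega)
  | add v w hv hw =>
    simp only [map_add, add_sub_add_comm]
    exact add_mem hv hw

theorem alpha_evenIncl_mem {n : ℕ} (z : Unitization k A ⊗[k] (⨂[k] (_ : Fin (2 * n + 2)), A)) :
    α (evenIncl k A n z) ∈ filtLT eT (2 * n + 3) := by
  obtain ⟨u, v, rfl⟩ := Unitization.exists_eq_one_tmul_add_map_inrHom z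
  rw [map_add, map_add]
  refine add_mem ?_ ?_
  · exact (Submodule.sub_mem_iff_left _ (incl_mem_filtLT (by omega) u)).1
      (filtLT_mono (by omega) (alpha_one_tmul_sub_incl_mem hmul hι α hα u))
  · exact (Submodule.sub_mem_iff_left _ (incl_mem_filtLT (by omega) _)).1
      (filtLT_mono (by omega) (alpha_inr_sub_incl_mem hmul hι α hα v))

theorem eq_zero_of_alpha_evenIncl_mem {N : ℕ}
    {z : Unitization k A ⊗[k] (⨂[k] (_ : Fin (2 * N + 2)), A)}
    (h : α (evenIncl k A N z) ∈ filtLT eT (2 * N + 1)) : z = 0 := by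
  -- Modulo `filtLT eT (2N+2)` only the `A`-part `v` of `z` survives, through `consEquiv`;
  -- once `v = 0`, what survives modulo `filtLT eT (2N+1)` is the scalar part `u`.
  obtain ⟨u, v, rfl⟩ := Unitization.exists_eq_one_tmul_add_map_inrHom z
  rw [map_add, map_add] at h
  have hu := alpha_one_tmul_sub_incl_mem hmul hι α hα u
  have hv : v = 0 := by
    have hu' : α (evenIncl k A N (1 ⊗ₜ u)) ∈ filtLT eT (2 * N + 2) :=
      (Submodule.sub_mem_iff_left _ (incl_mem_filtLT (by omega) u)).1 (filtLT_mono (by omega) hu)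
    have hcons : incl eT (2 * N + 2) (consEquiv (2 * N + 2) v) ∈ filtLT eT (2 * N + 2) := by
      convert sub_mem (sub_mem (filtLT_mono (by omega) h) hu')
        (alpha_inr_sub_incl_mem hmul hι α hα v) using 1
      abel
    simpa using incl_mem_filtLT_iff.1 hcons
  rw [hv, map_zero, map_zero, map_zero, add_zero] at h
  rw [hv, incl_mem_filtLT_iff.1 ((Submodule.sub_mem_iff_right _ h).1 hu)]
  simp

variable (hα0 : ∀ b, α (b, 0) = ι b)
include hα0

theorem alpha_mem_filtLT (b : A) {N : ℕ}
    {w : ⨁ n : ℕ, Unitization k A ⊗[k] (⨂[k] (_ : Fin (2 * n + 2)), A)}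
    (hw : w ∈ degLT k _ N) : α (b, w) ∈ filtLT eT (2 * N + 1) := by
  have hw' : degLT k _ N ≤ (filtLT eT (2 * N + 1)).comap (α ∘ₗ LinearMap.inr k A _) := by
    rw [degLT_eq_iSup]
    refine iSup₂_le fun j hj => ?_
    rintro _ ⟨z, rfl⟩
    exact filtLT_mono (by omega) (alpha_evenIncl_mem hmul hι α hα z)
  rw [← add_zero b, ← zero_add w, ← Prod.mk_add_mk, map_add, hα0]
  exact add_mem (filtLT_mono (by omega) (ι_mem_filtLT hι b)) (hw' hw)

theorem eq_zero_of_alpha_eq_zero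
    {v : A × ⨁ n : ℕ, Unitization k A ⊗[k] (⨂[k] (_ : Fin (2 * n + 2)), A)} (h : α v = 0) :
    v = 0 := by
  obtain ⟨b, w⟩ := v
  obtain ⟨N, hN⟩ := exists_mem_degLT (R := k) w
  have hw : w = 0 := by
    induction N generalizing w with
    | zero => simpa [degLT_zero] using hN
    | succ N ih =>
      have hlow := sub_lof_mem_degLT hN
      have htop : w N = 0 := by
        refine eq_zero_of_alpha_evenIncl_mem hmul hι α hα ?_
        have : α (evenIncl k A N (w N)) = -α (b, w - lof k ℕ _ N (w N)) := by
          rw [eq_neg_iff_add_eq_zero, ← h, ← map_add]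
          congr 1
          simp [evenIncl]
        rw [this]
        exact neg_mem (alpha_mem_filtLT hmul hι α hα hα0 b hlow)
      rw [htop, map_zero, sub_zero] at hlow
      exact ih w h hlow
  subst hw
  rw [hα0, ← ι_zero hι] at h
  simp [ι_injective hι h]

theorem alpha_injective : Function.Injective α := fun x y hxy =>
  sub_eq_zero.1 (eq_zero_of_alpha_eq_zero hmul hι α hα hα0 (by rw [map_sub, hxy, sub_self]))

theorem incl_mem_range_alpha (m : ℕ) (t : ⨂[k] (_ : Fin (m + 1)), A) :
    incl eT m t ∈ LinearMap.range α := by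
  induction m using Nat.strong_induction_on with
  | _ m ih =>
  have hlow : filtLT eT m ≤ LinearMap.range α := filtLT_le_of_incl_mem ih
  match m, t, hlow with
  | 0, t, _ =>
    refine ⟨(subsingletonEquiv (0 : Fin 1) t, 0), ?_⟩
    rw [hα0, ι_eq_incl hι, LinearEquiv.symm_apply_apply]
  | m + 1, t, hlow =>
    rcases Nat.even_or_odd' m with ⟨n, rfl | rfl⟩
    · rw [← sub_sub_cancel (α (evenIncl k A n (1 ⊗ₜ t))) (incl eT _ t)]
      exact sub_mem ⟨_, rfl⟩ (hlow (alpha_one_tmul_sub_incl_mem hmul hι α hα t))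
    · obtain ⟨v, rfl⟩ := (consEquiv (2 * n + 2)).surjective t
      rw [← sub_sub_cancel (α (evenIncl k A n (TensorProduct.map (Unitization.inrHom k k A)
        LinearMap.id v))) (incl eT _ _)]
      exact sub_mem ⟨_, rfl⟩ (hlow (alpha_inr_sub_incl_mem hmul hι α hα v))

theorem alpha_surjective : Function.Surjective α := fun t => by
  obtain ⟨N, hN⟩ := exists_mem_filtLT (eT := eT) t
  exact filtLT_le_of_incl_mem (fun j _ => incl_mem_range_alpha hmul hι α hα hα0 j) hN

end Concatenation

end TensorModel

theorem even_forms_equiv_tensorAlgebra_general (k A : Type) [Field k] [NonUnitalRing A]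
    [Module k A]
    (T : Type) [NonUnitalRing T] [Module k T] [SMulCommClass k T T]
    [IsScalarTower k T T]
    -- `T ≅ ⊕_{m ≥ 0} A^{⊗(m+1)}` as a `k`-module …
    (eT : T ≃ₗ[k] ⨁ (m : ℕ), ⨂[k] (_ : Fin (m + 1)), A)
    -- … with the concatenation product:
    (hmul : ∀ (p q : ℕ) (a c : ℕ → A),
      eT.symm (DirectSum.of (fun m => ⨂[k] (_ : Fin (m + 1)), A) p
          (⨂ₜ[k] (i : Fin (p + 1)), a i))
        * eT.symm (DirectSum.of (fun m => ⨂[k] (_ : Fin (m + 1)), A) q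
          (⨂ₜ[k] (i : Fin (q + 1)), c i))
      = eT.symm (DirectSum.of (fun m => ⨂[k] (_ : Fin (m + 1)), A) (p + q + 1)
          (⨂ₜ[k] (i : Fin (p + q + 2)),
            (if (i : ℕ) ≤ p then a i else c ((i : ℕ) - (p + 1))))))
    -- the inclusion `ι : A = A^{⊗1} → T`
    (ι : A → T)
    (hι : ∀ a : A, ι a = eT.symm (DirectSum.of (fun m => ⨂[k] (_ : Fin (m + 1)), A) 0
        (⨂ₜ[k] (_ : Fin 1), a)))
    -- `α : Ω^{ev}A → T`, where `Ω^{ev}A = Ω⁰A ⊕ ⊕_{n≥0} Ω^{2n+2}A`: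
    (α : (A × ⨁ (n : ℕ), (Unitization k A ⊗[k] (⨂[k] (_ : Fin (2 * n + 2)), A))) →ₗ[k] T)
    (hα0 : ∀ a : A, α (a, 0) = ι a)
    (hα : ∀ (n : ℕ) (x : Unitization k A) (a : ℕ → A),
      α (0, DirectSum.of (fun n => Unitization k A ⊗[k] (⨂[k] (_ : Fin (2 * n + 2)), A)) n
          (x ⊗ₜ[k] (⨂ₜ[k] (i : Fin (2 * n + 2)), a i)))
        = ι x.snd * chainProd
              (fun j => ι (a (2 * j)) * ι (a (2 * j + 1)) - ι (a (2 * j) * a (2 * j + 1)))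
              n
          + x.fst • chainProd
              (fun j => ι (a (2 * j)) * ι (a (2 * j + 1)) - ι (a (2 * j) * a (2 * j + 1)))
              n) :
    Function.Bijective α :=
  ⟨TensorModel.alpha_injective hmul hι α hα hα0, TensorModel.alpha_surjective hmul hι α hα hα0⟩

/-- Let `T` be (a model of) the non-unital tensor algebra
`TA = ⊕_{m≥1} A^{⊗m}` of `A`, with `ι : A → T` the inclusion of the degree-one
part, and let `ω(x,y) = ι x * ι y − ι (x*y)` for `x, y ∈ A`.  Then any
`k`-linear map `α : Ω^{ev}A → TA` with `α(a) = ι a` for `a ∈ Ω⁰A = A` and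
`α((a,λ) ⊗ a₁ ⊗ … ⊗ a₂ₙ₊₂) = ι a * π + λ • π` for
`π = ω(a₁,a₂) ⋯ ω(a₂ₙ₊₁,a₂ₙ₊₂)`, is a `k`-linear bijection. -/
theorem even_forms_equiv_tensorAlgebra (k A : Type) [Field k] [NonUnitalRing A]
    [Module k A] [SMulCommClass k A A] [IsScalarTower k A A]
    (T : Type) [NonUnitalRing T] [Module k T] [SMulCommClass k T T]
    [IsScalarTower k T T]
    -- `T ≅ ⊕_{m ≥ 0} A^{⊗(m+1)}` as a `k`-module …
    (eT : T ≃ₗ[k] ⨁ (m : ℕ), ⨂[k] (_ : Fin (m + 1)), A)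
    -- … with the concatenation product:
    (hmul : ∀ (p q : ℕ) (a c : ℕ → A),
      eT.symm (DirectSum.of (fun m => ⨂[k] (_ : Fin (m + 1)), A) p
          (⨂ₜ[k] (i : Fin (p + 1)), a i))
        * eT.symm (DirectSum.of (fun m => ⨂[k] (_ : Fin (m + 1)), A) q
          (⨂ₜ[k] (i : Fin (q + 1)), c i))
      = eT.symm (DirectSum.of (fun m => ⨂[k] (_ : Fin (m + 1)), A) (p + q + 1)
          (⨂ₜ[k] (i : Fin (p + q + 2)),
            (if (i : ℕ) ≤ p then a i else c ((i : ℕ) - (p + 1))))))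
    -- the inclusion `ι : A = A^{⊗1} → T`
    (ι : A → T)
    (hι : ∀ a : A, ι a = eT.symm (DirectSum.of (fun m => ⨂[k] (_ : Fin (m + 1)), A) 0
        (⨂ₜ[k] (_ : Fin 1), a)))
    -- `α : Ω^{ev}A → T`, where `Ω^{ev}A = Ω⁰A ⊕ ⊕_{n≥0} Ω^{2n+2}A`:
    (α : (A × ⨁ (n : ℕ), (Unitization k A ⊗[k] (⨂[k] (_ : Fin (2 * n + 2)), A))) →ₗ[k] T)
    (hα0 : ∀ a : A, α (a, 0) = ι a)
    (hα : ∀ (n : ℕ) (x : Unitization k A) (a : ℕ → A),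
      α (0, DirectSum.of (fun n => Unitization k A ⊗[k] (⨂[k] (_ : Fin (2 * n + 2)), A)) n
          (x ⊗ₜ[k] (⨂ₜ[k] (i : Fin (2 * n + 2)), a i)))
        = ι x.snd * chainProd
              (fun j => ι (a (2 * j)) * ι (a (2 * j + 1)) - ι (a (2 * j) * a (2 * j + 1)))
              n
          + x.fst • chainProd
              (fun j => ι (a (2 * j)) * ι (a (2 * j + 1)) - ι (a (2 * j) * a (2 * j + 1)))
              n) :
    Function.Bijective α :=
  even_forms_equiv_tensorAlgebra_general k A T eT hmul ι hι α hα0 hα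
end

section
/- Let k be a field of characteristic 0, R a unital associative k-algebra which is quasi-free, and I a two-sided ideal of R. Then the multiplication map m : I ⊗ₖ I → I², m(x ⊗ y) = xy, admits an I-linear splitting: there exists a k-linear map s : I² → I ⊗ₖ I such that m ∘ s = id on I² and s(a·x) = a·s(x) for all a ∈ I and x ∈ I², where I acts on I ⊗ₖ I by a·(x ⊗ y) = (ax) ⊗ y. -/
/-!
STATEMENT 8: Let `k` be a field of characteristic 0, `R` a unital associative
`k`-algebra which is quasi-free, and `I` a two-sided ideal of `R`.  Then the
multiplication map `m : I ⊗ₖ I → I²`, `m (x ⊗ y) = x * y`, admits an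
`I`-linear splitting: a `k`-linear `s : I² → I ⊗ₖ I` with `m ∘ s = id` and
`s (a • x) = a • s x` for `a ∈ I`, `x ∈ I²`, where `I` acts on `I ⊗ₖ I`
through the first factor.

A two-sided ideal of `R` is formalized as a `k`-submodule `I ⊆ R` closed under
left and right multiplication by arbitrary elements of `R` (every two-sided
ring ideal is automatically a `k`-submodule since `k` is central in `R`).
-/

open TensorProduct

/-- A unital associative `k`-algebra `A` is *quasi-free* if for every unital
associative `k`-algebra `S`, every two-sided ideal `N` of `S` with `N ^ m = 0`
for some `m ≥ 1`, and every unital `k`-algebra homomorphism `α : A → S/N`,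
there is a unital `k`-algebra homomorphism `α' : A → S` with `q ∘ α' = α`.
Nilpotent extensions are phrased as surjective algebra homomorphisms
`q : S → B` whose kernel `N` satisfies `N ^ m = 0`. -/
def IsQuasiFree (k A : Type) [Field k] [Ring A] [Algebra k A] : Prop :=
  ∀ (S B : Type) [Ring S] [Ring B] [Algebra k S] [Algebra k B] (q : S →ₐ[k] B),
    Function.Surjective q →
    (∃ m : ℕ, 1 ≤ m ∧ ∀ f : Fin m → S, (∀ i, q (f i) = 0) → (List.ofFn f).prod = 0) →
    ∀ α : A →ₐ[k] B, ∃ α' : A →ₐ[k] S, q.comp α' = α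

variable (k R : Type) [Field k] [Ring R] [Algebra k R]

/-- `I²`: the `k`-linear span of all products `x * y` with `x, y ∈ I`. -/
def idealSq (I : Submodule k R) : Submodule k R :=
  Submodule.span k {z | ∃ x ∈ I, ∃ y ∈ I, z = x * y}

theorem mul_mem_idealSq {I : Submodule k R} {x y : R} (hx : x ∈ I) (hy : y ∈ I) :
    x * y ∈ idealSq k R I :=
  Submodule.subset_span ⟨x, hx, y, hy, rfl⟩

theorem idealSq_le {I : Submodule k R}
    (hleft : ∀ (r x : R), x ∈ I → r * x ∈ I) : idealSq k R I ≤ I := by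
  rw [idealSq, Submodule.span_le]
  rintro _ ⟨x, hx, y, hy, rfl⟩
  exact hleft x y hy

/-- For `a ∈ I` and `x ∈ I²` one has `a * x ∈ I²`. -/
theorem smul_mem_idealSq {I : Submodule k R}
    (hleft : ∀ (r x : R), x ∈ I → r * x ∈ I) {a x : R}
    (ha : a ∈ I) (hx : x ∈ idealSq k R I) : a * x ∈ idealSq k R I :=
  mul_mem_idealSq k R ha (idealSq_le k R hleft hx)

/-- The multiplication map `m : I ⊗ₖ I → I²`, `m (x ⊗ y) = x * y`. -/
noncomputable def mulII (I : Submodule k R) : (I ⊗[k] I) →ₗ[k] idealSq k R I :=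
  TensorProduct.lift
    (LinearMap.mk₂ k (fun x y : I => (⟨(x : R) * (y : R),
        mul_mem_idealSq k R x.2 y.2⟩ : idealSq k R I))
      (fun x x' y => by ext; simp [add_mul])
      (fun c x y => by ext; simp [smul_mul_assoc])
      (fun x y y' => by ext; simp [mul_add])
      (fun c x y => by ext; simp [mul_smul_comm]))

/-- Left multiplication by `a ∈ I` as a `k`-linear endomorphism of `I`. -/
def mulL {I : Submodule k R} (hleft : ∀ (r x : R), x ∈ I → r * x ∈ I) (a : I) :
    I →ₗ[k] I where
  toFun x := ⟨(a : R) * (x : R), hleft a x x.2⟩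
  map_add' x y := by ext; simp [mul_add]
  map_smul' c x := by ext; simp [mul_smul_comm]

/-!
Quasi-freeness lets derivations of `R` lift along surjections of bimodules: a derivation into
`M''` is an algebra section of the square-zero extension `R ⋉ M'' → R`, and a lift of it to
`R ⋉ M` through the nilpotent extension `R ⋉ M → R ⋉ M''` is a lifted derivation.

If `1 ∈ I²` then `I = R` and `z ↦ z ⊗ 1` is the splitting. Otherwise pick a `k`-linear
retraction `π : R → I²` with `π 1 = 0`. The values of the inner derivation
`r ↦ π ∘ (r ·) - (r ·) ∘ π` into `Hom_k(R, I²)` vanish on `I²`, so it descends to a derivation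
into `Hom_k(R/I², I²)`; lift it along
`m : I ⊗ I → I²` to `D` and put `s z = D z 1̄`. Then `m (s z) = π z - z π 1 = z`, and the Leibniz
rule gives `s (a x) = a • s x + D a (x 1̄) = a • s x` since `x 1̄ = 0` in `R/I²`.
-/

section Representation

variable {k R V : Type*} [CommRing k] [Ring R] [Algebra k R] [AddCommGroup V] [Module k V]
  (ρ : R →ₐ[k] Module.End k V) {W : Submodule k V} (hW : ∀ r x, x ∈ W → ρ r x ∈ W)

def endRestrict : R →ₐ[k] Module.End k W where
  toFun r := (ρ r).restrict (hW r)
  map_one' := by ext; simp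
  map_mul' _ _ := by ext; simp
  map_zero' := by ext; simp
  map_add' _ _ := by ext; simp
  commutes' _ := by ext; simp

def endQuotient : R →ₐ[k] Module.End k (V ⧸ W) where
  toFun r := W.mapQ W (ρ r) (hW r)
  map_one' := by ext; simp
  map_mul' _ _ := by ext; simp
  map_zero' := by ext; simp
  map_add' _ _ := by ext; simp
  commutes' _ := by ext; simp

@[simp]
theorem endQuotient_apply_mk (r : R) (x : V) :
    endQuotient ρ hW r (Submodule.Quotient.mk x) = Submodule.Quotient.mk (ρ r x) := rfl

end Representation

section TrivialExtension

variable {k R X V W : Type*} [CommRing k] [Ring R] [Algebra k R]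
  [AddCommGroup X] [Module k X] [AddCommGroup V] [Module k V] [AddCommGroup W] [Module k W]
  (ρX : R →ₐ[k] Module.End k X) (ρV : R →ₐ[k] Module.End k V) (ρW : R →ₐ[k] Module.End k W)

def triangularEnd (r : R) (f : X →ₗ[k] V) : Module.End k (X × V) :=
  (ρX r).prodMap (ρV r) + LinearMap.inr k X V ∘ₗ f ∘ₗ LinearMap.fst k X V

@[simp]
theorem triangularEnd_apply (r : R) (f : X →ₗ[k] V) (w : X × V) :
    triangularEnd ρX ρV r f w = (ρX r w.1, ρV r w.2 + f w.1) := by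
  simp [triangularEnd]

variable (X V) in
def offDiag : Module.End k (X × V) →ₗ[k] X →ₗ[k] V :=
  LinearMap.lcomp k V (LinearMap.inl k X V) ∘ₗ
    LinearMap.llcomp k (X × V) (X × V) V (LinearMap.snd k X V)

@[simp]
theorem offDiag_apply (φ : Module.End k (X × V)) (x : X) : offDiag X V φ x = (φ (x, 0)).2 := rfl

@[simp]
theorem offDiag_triangularEnd (r : R) (f : X →ₗ[k] V) :
    offDiag X V (triangularEnd ρX ρV r f) = f := by
  ext; simp

theorem triangularEnd_mul (r r' : R) (f g : X →ₗ[k] V) :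
    triangularEnd ρX ρV r f * triangularEnd ρX ρV r' g =
      triangularEnd ρX ρV (r * r') (ρV r ∘ₗ g + f ∘ₗ ρX r') := by
  ext <;> simp [add_comm]

theorem triangularEnd_add (r r' : R) (f g : X →ₗ[k] V) :
    triangularEnd ρX ρV r f + triangularEnd ρX ρV r' g =
      triangularEnd ρX ρV (r + r') (f + g) := by
  ext <;> simp

theorem triangularEnd_algebraMap (c : k) :
    triangularEnd ρX ρV (algebraMap k R c) 0 = algebraMap k _ c := by
  ext <;> simp [Module.algebraMap_end_apply]

/-- The trivial extension `R ⋉ Hom_k(X, V)`, realised inside `R × End_k(X × V)` so that its ring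
structure is inherited: `(r, f)` acts on `X × V` by the matrix `[[ρX r, 0], [f, ρV r]]`. -/
def trivialExtension : Subalgebra k (R × Module.End k (X × V)) where
  carrier := {p | ∃ f, p.2 = triangularEnd ρX ρV p.1 f}
  mul_mem' := by
    rintro p p' ⟨f, hf⟩ ⟨g, hg⟩
    exact ⟨ρV p.1 ∘ₗ g + f ∘ₗ ρX p'.1, by rw [Prod.snd_mul, hf, hg, triangularEnd_mul]; rfl⟩
  add_mem' := by
    rintro _ _ ⟨f, hf⟩ ⟨g, hg⟩
    exact ⟨f + g, by rw [Prod.snd_add, hf, hg, triangularEnd_add]; rfl⟩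
  algebraMap_mem' c := ⟨0, (triangularEnd_algebraMap ρX ρV c).symm⟩

/-- A derivation of `R` into the bimodule `Hom_k(X, V)`, on which `R` acts on the left through
`ρV` and on the right through `ρX`. -/
def IsHomDerivation (D : R →ₗ[k] X →ₗ[k] V) : Prop :=
  ∀ r r', D (r * r') = ρV r ∘ₗ D r' + D r ∘ₗ ρX r'

namespace trivialExtension

variable {ρX ρV}

theorem snd_eq_triangularEnd (p : trivialExtension ρX ρV) :
    p.1.2 = triangularEnd ρX ρV p.1.1 (offDiag X V p.1.2) := by
  obtain ⟨f, hf⟩ := p.2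
  rw [hf, offDiag_triangularEnd]

theorem mul_eq_zero_of_fst_eq_zero {p p' : trivialExtension ρX ρV} (hp : p.1.1 = 0)
    (hp' : p'.1.1 = 0) : p * p' = 0 := by
  obtain ⟨f, hf⟩ := p.2
  obtain ⟨g, hg⟩ := p'.2
  apply Subtype.ext
  ext : 1
  · simp [hp]
  · simp only [Subalgebra.coe_mul, Prod.snd_mul, hf, hg, hp, hp', triangularEnd_mul]
    ext <;> simp

variable (ρX ρV) in
def map (μ : V →ₗ[k] W) (hμ : ∀ r, μ ∘ₗ ρV r = ρW r ∘ₗ μ) :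
    trivialExtension ρX ρV →ₐ[k] trivialExtension ρX ρW where
  toFun p := ⟨(p.1.1, triangularEnd ρX ρW p.1.1 (μ ∘ₗ offDiag X V p.1.2)), _, rfl⟩
  map_one' := by ext <;> simp
  map_mul' p p' := by
    obtain ⟨f, hf⟩ := p.2
    obtain ⟨g, hg⟩ := p'.2
    apply Subtype.ext
    ext : 1
    · rfl
    · simp only [MulMemClass.coe_mul, Prod.snd_mul, Prod.fst_mul, hf, hg, triangularEnd_mul,
        offDiag_triangularEnd]
      rw [LinearMap.comp_add, ← LinearMap.comp_assoc, hμ, LinearMap.comp_assoc,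
        LinearMap.comp_assoc]
  map_zero' := by ext <;> simp
  map_add' p p' := by
    apply Subtype.ext
    ext : 1
    · rfl
    · simp only [AddMemClass.coe_add, Prod.snd_add, Prod.fst_add, map_add, LinearMap.comp_add,
        triangularEnd_add]
  commutes' c := by ext <;> simp

@[simp]
theorem coe_map_apply (μ : V →ₗ[k] W) (hμ : ∀ r, μ ∘ₗ ρV r = ρW r ∘ₗ μ)
    (p : trivialExtension ρX ρV) :
    (map ρX ρV ρW μ hμ p : R × Module.End k (X × W)) =
      (p.1.1, triangularEnd ρX ρW p.1.1 (μ ∘ₗ offDiag X V p.1.2)) := rfl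

variable {ρW} in
theorem map_surjective {μ : V →ₗ[k] W} (hμ : ∀ r, μ ∘ₗ ρV r = ρW r ∘ₗ μ) {σ : W →ₗ[k] V}
    (hσ : μ ∘ₗ σ = LinearMap.id) : Function.Surjective (map ρX ρV ρW μ hμ) := by
  intro p
  obtain ⟨g, hg⟩ := p.2
  refine ⟨⟨(p.1.1, triangularEnd ρX ρV p.1.1 (σ ∘ₗ g)), _, rfl⟩, Subtype.ext ?_⟩
  ext : 1
  · rfl
  · simp [hg, ← LinearMap.comp_assoc, hσ]

def derivation (φ : R →ₐ[k] trivialExtension ρX ρV) : R →ₗ[k] X →ₗ[k] V :=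
  offDiag X V ∘ₗ LinearMap.snd k R _ ∘ₗ (trivialExtension ρX ρV).val.toLinearMap ∘ₗ
    φ.toLinearMap

theorem derivation_apply (φ : R →ₐ[k] trivialExtension ρX ρV) (r : R) :
    derivation φ r = offDiag X V (φ r).1.2 := rfl

theorem isHomDerivation_derivation {φ : R →ₐ[k] trivialExtension ρX ρV}
    (hφ : ∀ r, (φ r).1.1 = r) : IsHomDerivation ρX ρV (derivation φ) := by
  intro r r'
  have h := snd_eq_triangularEnd (φ r)
  have h' := snd_eq_triangularEnd (φ r')
  rw [hφ] at h h'
  rw [derivation_apply, map_mul, MulMemClass.coe_mul, Prod.snd_mul, h, h', triangularEnd_mul,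
    offDiag_triangularEnd, derivation_apply, derivation_apply]

end trivialExtension

namespace IsHomDerivation

variable {ρX ρV} {D : R →ₗ[k] X →ₗ[k] V}

theorem map_one_eq_zero (hD : IsHomDerivation ρX ρV D) : D 1 = 0 := by
  simpa [Module.End.one_eq_id] using hD 1 1

def toAlgHom (hD : IsHomDerivation ρX ρV D) : R →ₐ[k] trivialExtension ρX ρV where
  toFun r := ⟨(r, triangularEnd ρX ρV r (D r)), _, rfl⟩
  map_one' := by
    apply Subtype.ext
    simp only [hD.map_one_eq_zero]
    ext <;> simp
  map_mul' r r' := by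
    apply Subtype.ext
    simp [hD r r', triangularEnd_mul]
  map_zero' := by
    apply Subtype.ext
    ext <;> simp
  map_add' r r' := by
    apply Subtype.ext
    simp [triangularEnd_add]
  commutes' c := by
    apply Subtype.ext
    have hc : D (algebraMap k R c) = 0 := by
      rw [Algebra.algebraMap_eq_smul_one, map_smul, hD.map_one_eq_zero, smul_zero]
    simp only [hc, triangularEnd_algebraMap]
    rfl

@[simp]
theorem coe_toAlgHom_apply (hD : IsHomDerivation ρX ρV D) (r : R) :
    (hD.toAlgHom r : R × Module.End k (X × V)) = (r, triangularEnd ρX ρV r (D r)) := rfl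

end IsHomDerivation

end TrivialExtension

section InnerDerivation

variable {k R V W : Type*} [CommRing k] [Ring R] [Algebra k R]
  [AddCommGroup V] [Module k V] [AddCommGroup W] [Module k W]
  (ρV : R →ₐ[k] Module.End k V) (ρW : R →ₐ[k] Module.End k W)

def innerHomDerivation (φ : V →ₗ[k] W) : R →ₗ[k] V →ₗ[k] W where
  toFun r := φ ∘ₗ ρV r - ρW r ∘ₗ φ
  map_add' r r' := by ext; simp; abel
  map_smul' c r := by ext; simp [smul_sub]

@[simp]
theorem innerHomDerivation_apply (φ : V →ₗ[k] W) (r : R) (v : V) :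
    innerHomDerivation ρV ρW φ r v = φ (ρV r v) - ρW r (φ v) := rfl

theorem isHomDerivation_innerHomDerivation (φ : V →ₗ[k] W) :
    IsHomDerivation ρV ρW (innerHomDerivation ρV ρW φ) := by
  intro r r'
  ext v
  simp [Module.End.mul_apply]

theorem le_ker_innerHomDerivation {N : Submodule k V} (hN : ∀ r v, v ∈ N → ρV r v ∈ N)
    {π : V →ₗ[k] N} (hπ : ∀ z : N, π z = z) (r : R) :
    N ≤ LinearMap.ker (innerHomDerivation ρV (endRestrict ρV hN) π r) := by
  intro z hz
  rw [LinearMap.mem_ker, innerHomDerivation_apply, sub_eq_zero]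
  exact (hπ ⟨_, hN r z hz⟩).trans (by rw [hπ ⟨z, hz⟩]; rfl)

variable {ρV ρW} {N : Submodule k V}

def homDerivationLiftQ (D : R →ₗ[k] V →ₗ[k] W) (hD : ∀ r, N ≤ LinearMap.ker (D r)) :
    R →ₗ[k] (V ⧸ N) →ₗ[k] W where
  toFun r := N.liftQ (D r) (hD r)
  map_add' r r' := by ext; simp
  map_smul' c r := by ext; simp

@[simp]
theorem homDerivationLiftQ_apply_mk (D : R →ₗ[k] V →ₗ[k] W) (hD : ∀ r, N ≤ LinearMap.ker (D r))
    (r : R) (v : V) : homDerivationLiftQ D hD r (Submodule.Quotient.mk v) = D r v := rfl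

theorem IsHomDerivation.liftQ {D : R →ₗ[k] V →ₗ[k] W} (hD : IsHomDerivation ρV ρW D)
    (hN : ∀ r v, v ∈ N → ρV r v ∈ N) (hDN : ∀ r, N ≤ LinearMap.ker (D r)) :
    IsHomDerivation (endQuotient ρV hN) ρW (homDerivationLiftQ D hDN) := by
  intro r r'
  ext v
  simp [hD r r']

end InnerDerivation

theorem Submodule.exists_retraction_apply_eq_zero {K V : Type*} [DivisionRing K]
    [AddCommGroup V] [Module K V] {p : Submodule K V} {v : V} (hv : v ∉ p) :
    ∃ π : V →ₗ[K] p, (∀ z : p, π z = z) ∧ π v = 0 := by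
  have hv0 : v ≠ 0 := fun h => hv (h ▸ p.zero_mem)
  have hinj : LinearMap.ker (p.subtype.coprod (LinearMap.toSpanSingleton K V v)) = ⊥ := by
    rw [LinearMap.ker_coprod_of_disjoint_range, p.ker_subtype,
      LinearMap.ker_toSpanSingleton K hv0, Submodule.prod_bot]
    rwa [p.range_subtype, ← LinearMap.span_singleton_eq_range, disjoint_span_singleton' hv0]
  obtain ⟨g, hg⟩ := LinearMap.exists_leftInverse_of_injective _ hinj
  refine ⟨LinearMap.fst K p K ∘ₗ g, fun z => ?_, ?_⟩
  · simpa using congrArg Prod.fst (LinearMap.congr_fun hg (z, 0))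
  · simpa using congrArg Prod.fst (LinearMap.congr_fun hg (0, 1))

theorem IsQuasiFree.exists_isHomDerivation_lift {k R X V W : Type} [Field k] [Ring R]
    [Algebra k R] [AddCommGroup X] [Module k X] [AddCommGroup V] [Module k V] [AddCommGroup W]
    [Module k W] (hR : IsQuasiFree k R) {ρX : R →ₐ[k] Module.End k X}
    {ρV : R →ₐ[k] Module.End k V} {ρW : R →ₐ[k] Module.End k W} {μ : V →ₗ[k] W}
    (hμ : Function.Surjective μ) (hμρ : ∀ r, μ ∘ₗ ρV r = ρW r ∘ₗ μ)
    {D : R →ₗ[k] X →ₗ[k] W} (hD : IsHomDerivation ρX ρW D) :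
    ∃ D' : R →ₗ[k] X →ₗ[k] V, IsHomDerivation ρX ρV D' ∧ ∀ r, μ ∘ₗ D' r = D r := by
  obtain ⟨σ, hσ⟩ := μ.exists_rightInverse_of_surjective (LinearMap.range_eq_top.2 hμ)
  let q := trivialExtension.map ρX ρV ρW μ hμρ
  have hq_ker_sq : ∀ f : Fin 2 → trivialExtension ρX ρV, (∀ i, q (f i) = 0) →
      (List.ofFn f).prod = 0 := fun f hf => by
    simpa using trivialExtension.mul_eq_zero_of_fst_eq_zero
      (by simpa [q] using congrArg (·.1.1) (hf 0)) (by simpa [q] using congrArg (·.1.1) (hf 1))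
  obtain ⟨φ, hφ⟩ := hR (trivialExtension ρX ρV) (trivialExtension ρX ρW) q
    (trivialExtension.map_surjective hμρ hσ) ⟨2, one_le_two, hq_ker_sq⟩ hD.toAlgHom
  have hqφ (r : R) : q (φ r) = hD.toAlgHom r := DFunLike.congr_fun hφ r
  refine ⟨trivialExtension.derivation φ, trivialExtension.isHomDerivation_derivation fun r => ?_,
    fun r => ?_⟩
  · simpa [q] using congrArg (·.1.1) (hqφ r)
  · simpa [q, trivialExtension.derivation_apply] using congrArg (offDiag X W ·.1.2) (hqφ r)

section IdealSq

variable {k R} {I : Submodule k R}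

theorem mul_mem_idealSq_left (hleft : ∀ (r x : R), x ∈ I → r * x ∈ I) (r : R) {z : R}
    (hz : z ∈ idealSq k R I) : r * z ∈ idealSq k R I := by
  induction hz using Submodule.span_induction with
  | mem _ h =>
    obtain ⟨x, hx, y, hy, rfl⟩ := h
    rw [← mul_assoc]
    exact mul_mem_idealSq k R (hleft r x hx) hy
  | zero => simp
  | add _ _ _ _ h h' => rw [mul_add]; exact add_mem h h'
  | smul c _ _ h => rw [mul_smul_comm]; exact Submodule.smul_mem _ c h

variable (I)

theorem idealSq_eq_mul : idealSq k R I = I * I := by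
  rw [idealSq, Submodule.mul_eq_span_mul_set]
  congr 1
  ext
  simp [Set.mem_mul, eq_comm]

theorem subtype_comp_mulII : (idealSq k R I).subtype ∘ₗ mulII k R I = Submodule.mulMap I I :=
  TensorProduct.ext' fun _ _ => rfl

theorem mulII_surjective : Function.Surjective (mulII k R I) := by
  rintro ⟨z, hz⟩
  rw [idealSq_eq_mul, ← Submodule.mulMap_range, ← subtype_comp_mulII] at hz
  obtain ⟨t, ht⟩ := hz
  exact ⟨t, Subtype.ext ht⟩

variable {I}

theorem mulII_comp_rTensor (hleft : ∀ (r x : R), x ∈ I → r * x ∈ I) (r : R) :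
    mulII k R I ∘ₗ (endRestrict (Algebra.lmul k R) hleft r).rTensor I =
      endRestrict (Algebra.lmul k R) (fun r _ => mul_mem_idealSq_left hleft r) r ∘ₗ
        mulII k R I :=
  TensorProduct.ext' fun x y => Subtype.ext (mul_assoc r x y)

theorem exists_mulII_splitting_of_one_mem (hleft : ∀ (r x : R), x ∈ I → r * x ∈ I)
    (h1 : (1 : R) ∈ idealSq k R I) :
    ∃ s : (idealSq k R I) →ₗ[k] (I ⊗[k] I),
      (∀ z : idealSq k R I, mulII k R I (s z) = z) ∧
      (∀ (a : I) (x : idealSq k R I),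
        s ⟨(a : R) * (x : R), smul_mem_idealSq k R hleft a.2 x.2⟩
          = LinearMap.rTensor (↥I) (mulL k R hleft a) (s x)) :=
  ⟨(TensorProduct.mk k I I).flip ⟨1, idealSq_le k R hleft h1⟩ ∘ₗ
      Submodule.inclusion (idealSq_le k R hleft),
    fun _ => Subtype.ext (mul_one _), fun _ _ => rfl⟩

end IdealSq

theorem ideal_mul_split_of_isQuasiFree (hR : IsQuasiFree k R)
    (I : Submodule k R)
    (hleft : ∀ (r x : R), x ∈ I → r * x ∈ I) :
    ∃ s : (idealSq k R I) →ₗ[k] (I ⊗[k] I),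
      (∀ z : idealSq k R I, mulII k R I (s z) = z) ∧
      (∀ (a : I) (x : idealSq k R I),
        s ⟨(a : R) * (x : R), smul_mem_idealSq k R hleft a.2 x.2⟩
          = LinearMap.rTensor (↥I) (mulL k R hleft a) (s x)) := by
  by_cases h1 : (1 : R) ∈ idealSq k R I
  · exact exists_mulII_splitting_of_one_mem hleft h1
  have hsq : ∀ r x, x ∈ idealSq k R I → Algebra.lmul k R r x ∈ idealSq k R I :=
    fun r _ => mul_mem_idealSq_left hleft r
  obtain ⟨π, hπ, hπ1⟩ := Submodule.exists_retraction_apply_eq_zero h1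
  have hμ (r : R) : mulII k R I ∘ₗ
      (Module.End.rTensorAlgHom k I I).comp (endRestrict (Algebra.lmul k R) hleft) r =
      endRestrict (Algebra.lmul k R) hsq r ∘ₗ mulII k R I :=
    mulII_comp_rTensor hleft r
  obtain ⟨D, hD, hμD⟩ := hR.exists_isHomDerivation_lift (V := I ⊗[k] I) (mulII_surjective I)
    hμ ((isHomDerivation_innerHomDerivation _ _ π).liftQ hsq (le_ker_innerHomDerivation _ hsq hπ))
  refine ⟨D.flip (Submodule.Quotient.mk 1) ∘ₗ (idealSq k R I).subtype, fun z => ?_, fun a x => ?_⟩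
  · simpa [hπ, hπ1] using congr(($(hμD z)) (Submodule.Quotient.mk 1))
  · have hx : endQuotient (Algebra.lmul k R) hsq x (Submodule.Quotient.mk 1) = 0 :=
      (Submodule.Quotient.mk_eq_zero _).2 (by simp)
    have := congr(($(hD a x)) (Submodule.Quotient.mk 1))
    rwa [LinearMap.add_apply, LinearMap.comp_apply, LinearMap.comp_apply, hx, map_zero,
      add_zero] at this
end
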